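/- arXiv:math/0502289 — 3 statements merged into one kernel-verified Lean document; each statement's English description precedes it below -/
import Mathlib

section
/- Let k be a field with 1/2 ∈ k, let A = k[[x_1,...,x_d]], B = A[[x_0]], and let F = x_0² + x_1² + ... + x_d² + G with G ∈ m_B³, where m_B is the maximal ideal of B. Then there exist a unit v_0 ∈ B, an element a_0 ∈ (x_1,...,x_d)B, and G_1 ∈ (x_1,...,x_d)³B such that F = v_0(x_0 + a_0)² + x_1² + ... + x_d² + G_1. -/
/-!
Split off the `x₀`-dependence of `G` twice: `G = g₀ + x₀ (g₁ + x₀ c)` with `g₀, g₁` free of `x₀`.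
As `G` has order `≥ 3`, the `(x₁,…,x_d)`-order of `g₀` is `≥ 3`, that of `g₁` is `≥ 2`, and `c` has
no constant term. A power series of `(x₁,…,x_d)`-order `≥ n` lies in `(x₁,…,x_d)ⁿ`: peel off one
variable at a time. Completing the square in `(1 + c) x₀² + g₁ x₀ + g₀`, which needs `2` invertible,
gives `v₀ = 1 + c`, `a₀ = g₁ / 2v₀` and `G₁ = g₀ - g₁² / 4v₀`.
-/

open MvPowerSeries Finsupp

theorem Finsupp.degree_eq_weight_indicator_compl_add {σ : Type*} (s : σ) (m : σ →₀ ℕ) :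
    degree m = weight (({s}ᶜ : Set σ).indicator 1) m + m s := by
  classical
  have h1 : (fun _ => 1 : σ → ℕ) = ({s}ᶜ : Set σ).indicator 1 + Pi.single s 1 := by
    ext i; by_cases hi : i = s <;> simp [hi]
  rw [degree_eq_weight_one, h1, ← weight_single_one_apply s m, weight_apply, weight_apply,
    weight_apply, ← Finsupp.sum_add]
  simp [mul_add]

namespace MvPowerSeries

variable {σ R : Type*} {w : σ → ℕ} {n : ℕ}

section CommSemiring

variable [CommSemiring R]

def weightedOrderIdeal (w : σ → ℕ) (n : ℕ) : Ideal (MvPowerSeries σ R) where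
  carrier := {f | n ≤ f.weightedOrder w}
  add_mem' hf hg := (le_min hf hg).trans (min_weightedOrder_le_add w)
  zero_mem' := by simp
  smul_mem' _ _ hf := hf.trans <| le_add_self.trans (le_weightedOrder_mul w)

variable {f : MvPowerSeries σ R}

theorem mem_weightedOrderIdeal_iff :
    f ∈ weightedOrderIdeal w n ↔ ∀ m, weight w m < n → coeff m f = 0 :=
  ⟨fun hf _ hm => coeff_eq_zero_of_lt_weightedOrder w ((Nat.cast_lt.mpr hm).trans_le hf),
    nat_le_weightedOrder w⟩

theorem weightedOrderIdeal_mul_le (a b : ℕ) :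
    weightedOrderIdeal w a * weightedOrderIdeal w b ≤
      (weightedOrderIdeal w (a + b) : Ideal (MvPowerSeries σ R)) :=
  Ideal.mul_le.mpr fun _ hf _ hg => by
    change ((a + b : ℕ) : ℕ∞) ≤ _
    rw [Nat.cast_add]
    exact (add_le_add hf hg).trans (le_weightedOrder_mul w)

end CommSemiring

section CommRing

variable [CommRing R]

theorem exists_eq_add_X_mul (s : σ) (f : MvPowerSeries σ R) :
    ∃ f₀ q : MvPowerSeries σ R, f = f₀ + X s * q ∧
      (∀ m, coeff m f₀ = if m s = 0 then coeff m f else 0) ∧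
      ∀ m, coeff m q = coeff (m + single s 1) f := by
  let f₀ : MvPowerSeries σ R := fun m => if m s = 0 then coeff m f else 0
  have hf₀ (m) : coeff m f₀ = if m s = 0 then coeff m f else 0 := rfl
  obtain ⟨q, hq⟩ : X s ∣ f - f₀ := X_dvd_iff.mpr fun m hm => by
    rw [map_sub, hf₀, if_pos hm, sub_self]
  refine ⟨f₀, q, eq_add_of_sub_eq' hq, hf₀, fun m => ?_⟩
  have := congrArg (coeff (single s 1 + m)) hq
  rw [X, coeff_add_monomial_mul, one_mul, map_sub, hf₀, if_neg (by simp), sub_zero,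
    add_comm] at this
  exact this.symm

variable {w : σ → ℕ} {n : ℕ}

theorem mem_span_X_mul_weightedOrderIdeal (T : Finset σ) (hT : ∀ i ∈ T, w i = 1)
    {f : MvPowerSeries σ R} (hf : f ∈ weightedOrderIdeal w (n + 1))
    (hfT : ∀ m : σ →₀ ℕ, (∀ i ∈ T, m i = 0) → coeff m f = 0) :
    f ∈ Ideal.span (X '' T) * weightedOrderIdeal w n := by
  classical
  induction T using Finset.induction_on generalizing f with
  | empty =>
    obtain rfl : f = 0 := ext fun m => hfT m (by simp)
    exact zero_mem _
  | insert s T hs ih =>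
    rw [Finset.forall_mem_insert] at hT
    obtain ⟨f₀, q, hfq, hf₀, hq⟩ := exists_eq_add_X_mul s f
    rw [mem_weightedOrderIdeal_iff] at hf
    have hf₀T : f₀ ∈ Ideal.span (X '' T) * weightedOrderIdeal w n := by
      refine ih hT.2 (mem_weightedOrderIdeal_iff.mpr fun m hm => ?_) fun m hm => ?_
      · rw [hf₀]; split_ifs
        exacts [hf m hm, rfl]
      · rw [hf₀]; split_ifs with hms
        exacts [hfT m (Finset.forall_mem_insert _ _ _ |>.mpr ⟨hms, hm⟩), rfl]
    have hqJ : q ∈ weightedOrderIdeal w n := mem_weightedOrderIdeal_iff.mpr fun m hm => by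
      rw [hq]
      exact hf _ (by rw [map_add, weight_single, hT.1]; simpa using hm)
    rw [hfq]
    refine add_mem (Ideal.mul_mono_left (Ideal.span_mono ?_) hf₀T)
      (Ideal.mul_mem_mul (Ideal.subset_span ⟨s, by simp, rfl⟩) hqJ)
    gcongr
    exact Finset.subset_insert _ _

theorem weightedOrderIdeal_indicator_le_span_X_pow {S : Set σ} (hS : S.Finite) (n : ℕ) :
    weightedOrderIdeal (S.indicator 1) n ≤
      (Ideal.span (X '' S) : Ideal (MvPowerSeries σ R)) ^ n := by
  induction n with
  | zero => simp
  | succ n ih =>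
    intro f hf
    rw [pow_succ']
    refine Ideal.mul_mono_right ih ?_
    have hspan := mem_span_X_mul_weightedOrderIdeal hS.toFinset (by simp_all) hf fun m hm => by
      refine mem_weightedOrderIdeal_iff.mp hf m ?_
      suffices weight (S.indicator 1) m = 0 by omega
      rw [weight_apply, Finsupp.sum]
      refine Finset.sum_eq_zero fun i _ => ?_
      by_cases hi : i ∈ S
      · simp [hm i (by simpa using hi)]
      · simp [hi]
    rwa [hS.coe_toFinset] at hspan

end CommRing

theorem maximalIdeal_pow_le_weightedOrderIdeal {k : Type*} [Field k] (n : ℕ) :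
    IsLocalRing.maximalIdeal (MvPowerSeries σ k) ^ n ≤ weightedOrderIdeal 1 n := by
  induction n with
  | zero =>
    exact fun _ _ => mem_weightedOrderIdeal_iff.mpr fun _ hm => absurd hm (Nat.not_lt_zero _)
  | succ n ih =>
    refine (Ideal.mul_mono ih fun f hf => ?_).trans (weightedOrderIdeal_mul_le n 1)
    refine mem_weightedOrderIdeal_iff.mpr fun m hm => ?_
    obtain rfl : m = 0 := by
      rw [← degree_eq_zero_iff, degree_eq_weight_one]
      exact Nat.lt_one_iff.mp hm
    have hf : ¬IsUnit f := hf
    rwa [isUnit_iff_constantCoeff, isUnit_iff_ne_zero, not_not,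
      ← coeff_zero_eq_constantCoeff_apply] at hf

end MvPowerSeries

/-- Lemma 3.1 (Lemma `claim`): if `F = x_0² + ⋯ + x_d² + G` with `G ∈ m_B³` in
`B = k[[x_0,…,x_d]]` and `1/2 ∈ k`, then `F = v₀(x₀+a₀)² + x₁² + ⋯ + x_d² + G₁`
with `v₀` a unit, `a₀ ∈ (x_1,…,x_d)B` and `G₁ ∈ (x_1,…,x_d)³B`. -/
theorem stmt_2 (k : Type*) [Field k] (h2 : IsUnit (2 : k)) (d : ℕ)
    (G : MvPowerSeries (Fin (d + 1)) k)
    (hG : G ∈ (IsLocalRing.maximalIdeal (MvPowerSeries (Fin (d + 1)) k)) ^ 3)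
    (F : MvPowerSeries (Fin (d + 1)) k)
    (hF : F = (∑ i : Fin (d + 1), (X i) ^ 2) + G) :
    ∃ (v0 : (MvPowerSeries (Fin (d + 1)) k)ˣ) (a0 G1 : MvPowerSeries (Fin (d + 1)) k),
      a0 ∈ Ideal.span {q : MvPowerSeries (Fin (d + 1)) k | ∃ i : Fin (d + 1), i ≠ 0 ∧ q = X i} ∧
      G1 ∈ (Ideal.span {q : MvPowerSeries (Fin (d + 1)) k |
              ∃ i : Fin (d + 1), i ≠ 0 ∧ q = X i}) ^ 3 ∧
      F = (v0 : MvPowerSeries (Fin (d + 1)) k) * (X 0 + a0) ^ 2 +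
          (∑ i ∈ Finset.univ.filter (fun i : Fin (d + 1) => i ≠ 0), (X i) ^ 2) + G1 := by
  set I := Ideal.span {q : MvPowerSeries (Fin (d + 1)) k | ∃ i : Fin (d + 1), i ≠ 0 ∧ q = X i}
  have hI : Ideal.span (X '' {0}ᶜ) = I := by
    congr 1; ext q; simp [eq_comm]
  have hGdeg : ∀ m : Fin (d + 1) →₀ ℕ, degree m < 3 → coeff m G = 0 := fun m hm =>
    mem_weightedOrderIdeal_iff.mp (maximalIdeal_pow_le_weightedOrderIdeal 3 hG) m
      (by rwa [degree_eq_weight_one] at hm)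
  have hS : ({0}ᶜ : Set (Fin (d + 1))).Finite := Set.toFinite _
  obtain ⟨g₀, q, hGq, hg₀, hq⟩ := exists_eq_add_X_mul 0 G
  obtain ⟨g₁, c, hqc, hg₁, hc⟩ := exists_eq_add_X_mul 0 q
  have hg₀I : g₀ ∈ I ^ 3 := hI ▸ weightedOrderIdeal_indicator_le_span_X_pow hS 3 <|
    mem_weightedOrderIdeal_iff.mpr fun m hm => by
      rw [hg₀]; split_ifs with h
      exacts [hGdeg m (by rw [degree_eq_weight_indicator_compl_add 0, h]; omega), rfl]
  have hg₁I : g₁ ∈ I ^ 2 := hI ▸ weightedOrderIdeal_indicator_le_span_X_pow hS 2 <|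
    mem_weightedOrderIdeal_iff.mpr fun m hm => by
      rw [hg₁]; split_ifs with h
      · rw [hq]
        refine hGdeg _ ?_
        rw [map_add, degree_single, degree_eq_weight_indicator_compl_add 0, h]
        omega
      · rfl
  have hu : IsUnit (1 + c) := by
    rw [isUnit_iff_constantCoeff, map_add, map_one, ← coeff_zero_eq_constantCoeff_apply, hc,
      zero_add, hq, hGdeg _ (by simp), add_zero]
    exact isUnit_one
  obtain ⟨t, ht⟩ := ((h2.map (C (σ := Fin (d + 1)))).mul hu).exists_right_inv
  refine ⟨hu.unit, g₁ * t, g₀ - (1 + c) * g₁ ^ 2 * t ^ 2, ?_, ?_, ?_⟩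
  · exact Ideal.mul_mem_right _ _ (Ideal.pow_le_self two_ne_zero hg₁I)
  · refine sub_mem hg₀I (Ideal.mul_mem_right _ _ (Ideal.mul_mem_left _ _ ?_))
    have hg₁sq := Ideal.pow_mem_pow hg₁I 2
    rw [← pow_mul] at hg₁sq
    exact Ideal.pow_le_pow_right (by norm_num) hg₁sq
  · rw [hF, hGq, hqc, IsUnit.unit_spec, Finset.filter_ne',
      ← Finset.add_sum_erase _ _ (Finset.mem_univ 0)]
    rw [map_ofNat] at ht
    linear_combination (-(X 0 * g₁)) * ht
end

section
/- (Weierstrass Preparation) Let (A, m) be a complete Noetherian local ring and B = A[[t]]. If f = Σ_{i≥0} a_i t^i ∈ B is such that a_i ∈ m for all i < n and a_n ∉ m for some n ∈ ℕ, then f = u·f_0 where u is a unit in B and f_0 is a distinguished polynomial of degree n (i.e., f_0 = t^n + b_{n-1}t^{n-1} + ... + b_0 with all b_i ∈ m). Moreover u and f_0 are uniquely determined by f. -/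
/-!
Divide `X ^ n` by `f` in the Weierstrass sense, `X ^ n = q * f + r` with `deg r < n`; reducing
modulo the maximal ideal forces `q` to be a unit, so `f = q⁻¹ * (X ^ n - r)` with `X ^ n - r`
distinguished. Uniqueness of the division gives uniqueness of the factorization. The degree of
the distinguished factor is the order of the reduction of `f` modulo `m`, which is `n`.
-/

open PowerSeries IsLocalRing

theorem Polynomial.isDistinguishedAt_iff {R : Type*} [CommRing R] {p : Polynomial R}
    {I : Ideal R} : p.IsDistinguishedAt I ↔ p.Monic ∧ ∀ i < p.natDegree, p.coeff i ∈ I :=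
  ⟨fun h => ⟨h.monic, fun _ hi => h.mem hi⟩, fun h => ⟨⟨fun hi => h.2 _ hi⟩, h.1⟩⟩

namespace PowerSeries

variable {A : Type*} [CommRing A] [IsLocalRing A]

theorem order_map_residue_eq {f : PowerSeries A} {n : ℕ}
    (h1 : ∀ i < n, coeff i f ∈ maximalIdeal A) (h2 : coeff n f ∉ maximalIdeal A) :
    (f.map (residue A)).order = n := by
  simpa [order_eq_nat, coeff_map, residue_eq_zero_iff, h2] using h1

theorem IsWeierstrassFactorization.natDegree_eq {f h : PowerSeries A} {p : Polynomial A}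
    {n : ℕ} (H : f.IsWeierstrassFactorization p h)
    (h1 : ∀ i < n, coeff i f ∈ maximalIdeal A) (h2 : coeff n f ∉ maximalIdeal A) :
    p.natDegree = n := by
  rw [H.natDegree_eq_toNat_order_map, order_map_residue_eq h1 h2, ENat.toNat_natCast]

end PowerSeries

theorem stmt_5_general (A : Type*) [CommRing A] [IsLocalRing A]
    [IsAdicComplete (IsLocalRing.maximalIdeal A) A]
    (f : PowerSeries A) (n : ℕ)
    (h1 : ∀ i < n, PowerSeries.coeff i f ∈ IsLocalRing.maximalIdeal A)
    (h2 : PowerSeries.coeff n f ∉ IsLocalRing.maximalIdeal A) :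
    ∃! uf : (PowerSeries A)ˣ × Polynomial A,
      uf.2.Monic ∧ uf.2.natDegree = n ∧
      (∀ i < n, uf.2.coeff i ∈ IsLocalRing.maximalIdeal A) ∧
      f = (uf.1 : PowerSeries A) * (uf.2 : PowerSeries A) := by
  have hf : f.map (residue A) ≠ 0 := by
    rw [← order_finite_iff_ne_zero, order_map_residue_eq h1 h2]
    exact ENat.natCast_lt_top n
  obtain ⟨p, h, H⟩ := exists_isWeierstrassFactorization hf
  have hp := H.natDegree_eq h1 h2
  refine ⟨(H.isUnit.unit, p), ⟨H.isDistinguishedAt.monic, hp, fun i hi => ?_, ?_⟩, ?_⟩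
  · exact H.isDistinguishedAt.mem (hp ▸ hi)
  · exact H.eq_mul.trans (mul_comm _ _)
  rintro ⟨u, q⟩ ⟨hq_monic, hq_deg, hq_mem, hf_eq⟩
  have H' : f.IsWeierstrassFactorization q u :=
    ⟨Polynomial.isDistinguishedAt_iff.2 ⟨hq_monic, hq_deg ▸ hq_mem⟩, u.isUnit,
      hf_eq.trans (mul_comm _ _)⟩
  obtain ⟨rfl, hu⟩ := H'.elim H
  exact Prod.ext (Units.ext hu) rfl

/-- Weierstrass Preparation Theorem: over a complete Noetherian local ring `(A, m)`, if
`f = Σ a_i tⁱ ∈ A[[t]]` has `a_i ∈ m` for `i < n` and `a_n ∉ m`, then `f = u·f₀` with `u`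
a unit of `A[[t]]` and `f₀` a distinguished polynomial of degree `n` (monic of degree `n`
with all lower coefficients in `m`), and `u`, `f₀` are uniquely determined by `f`. -/
theorem stmt_5 (A : Type*) [CommRing A] [IsLocalRing A] [IsNoetherianRing A]
    [IsAdicComplete (IsLocalRing.maximalIdeal A) A]
    (f : PowerSeries A) (n : ℕ)
    (h1 : ∀ i < n, PowerSeries.coeff i f ∈ IsLocalRing.maximalIdeal A)
    (h2 : PowerSeries.coeff n f ∉ IsLocalRing.maximalIdeal A) :
    ∃! uf : (PowerSeries A)ˣ × Polynomial A,
      uf.2.Monic ∧ uf.2.natDegree = n ∧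
      (∀ i < n, uf.2.coeff i ∈ IsLocalRing.maximalIdeal A) ∧
      f = (uf.1 : PowerSeries A) * (uf.2 : PowerSeries A) :=
  stmt_5_general A f n h1 h2
end

section
/- (Prime avoidance with generic linear combinations) Let R be a ring containing an infinite field k, let I_1,...,I_m be prime ideals of R, and let f_1,...,f_n ∈ R be such that the ideal (f_1,...,f_n) is not contained in I_i for each i. Then there exists a nonzero homogeneous polynomial H(Z_1,...,Z_n) ∈ k[Z_1,...,Z_n] such that Σ a_i f_i ∉ I_1 ∪ ... ∪ I_m for all (a_1,...,a_n) ∈ k^n with H(a_1,...,a_n) ≠ 0. -/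
/-- Prime avoidance with generic linear combinations: if `R` contains an infinite field `k`,
`I_1,…,I_m` are prime ideals and `(f_1,…,f_n) ⊄ I_i` for each `i`, then there is a nonzero
homogeneous polynomial `H ∈ k[Z_1,…,Z_n]` such that `Σ a_i f_i ∉ I_1 ∪ ⋯ ∪ I_m` whenever
`H(a_1,…,a_n) ≠ 0`. -/
theorem stmt_6 (R k : Type*) [CommRing R] [Field k] [Infinite k] [Algebra k R]
    (m n : ℕ) (I : Fin m → Ideal R) (hI : ∀ i, (I i).IsPrime)
    (f : Fin n → R) (hf : ∀ i, ¬ Ideal.span (Set.range f) ≤ I i) :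
    ∃ (N : ℕ) (H : MvPolynomial (Fin n) k), H ≠ 0 ∧ H.IsHomogeneous N ∧
      ∀ a : Fin n → k, MvPolynomial.eval a H ≠ 0 →
        ∀ j : Fin m, (∑ i, a i • f i) ∉ I j := by
  classical
  have key : ∀ j : Fin m, ∃ φ : ((Fin n → k) →ₗ[k] k), φ ≠ 0 ∧
      ∀ a : Fin n → k, φ a ≠ 0 → (∑ i, a i • f i) ∉ I j := by
    intro j
    obtain ⟨i0, hi0⟩ : ∃ i, f i ∉ I j := by
      by_contra h; push_neg at h
      exact hf j (Ideal.span_le.2 (by rintro x ⟨i, rfl⟩; exact h i))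
    let S : (Fin n → k) →ₗ[k] R :=
      { toFun := fun a => ∑ i, a i • f i
        map_add' := fun a b => by simp [add_smul, Finset.sum_add_distrib]
        map_smul' := fun c a => by simp [Finset.smul_sum, smul_smul] }
    let T : (Fin n → k) →ₗ[k] R ⧸ I j :=
      (Ideal.Quotient.mkₐ k (I j)).toLinearMap.comp S
    have hker : LinearMap.ker T < ⊤ := by
      rw [lt_top_iff_ne_top]
      intro h
      have h1 : Pi.single i0 (1 : k) ∈ LinearMap.ker T := h ▸ Submodule.mem_top
      rw [LinearMap.mem_ker] at h1
      have : T (Pi.single i0 1) = Ideal.Quotient.mk (I j) (f i0) := by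
        simp only [T, S, LinearMap.comp_apply, LinearMap.coe_mk, AddHom.coe_mk]
        rw [Finset.sum_eq_single i0]
        · simp
        · intro b _ hb; simp [Pi.single_eq_of_ne hb]
        · simp
      rw [this, Ideal.Quotient.eq_zero_iff_mem] at h1
      exact hi0 h1
    obtain ⟨φ, hφ0, hφ⟩ :=
      Submodule.exists_dual_map_eq_bot_of_lt_top hker inferInstance
    refine ⟨φ, hφ0, ?_⟩
    intro a ha hmem
    apply ha
    have hT : a ∈ LinearMap.ker T := by
      rw [LinearMap.mem_ker]
      show Ideal.Quotient.mk (I j) (∑ i, a i • f i) = 0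
      exact Ideal.Quotient.eq_zero_iff_mem.2 hmem
    have : φ a ∈ Submodule.map φ (LinearMap.ker T) := ⟨a, hT, rfl⟩
    rwa [hφ, Submodule.mem_bot] at this
  choose φ hφ0 hφ using key
  set L : Fin m → MvPolynomial (Fin n) k :=
    fun j => ∑ i, MvPolynomial.C (φ j (Pi.single i 1)) * MvPolynomial.X i with hL
  have evalL : ∀ (j) (a : Fin n → k), MvPolynomial.eval a (L j) = φ j a := by
    intro j a
    have ha : a = ∑ i, a i • (Pi.single i 1 : Fin n → k) := by
      have h1 : ∀ i : Fin n, a i • (Pi.single i 1 : Fin n → k) = Pi.single i (a i) :=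
        fun i => by rw [← Pi.single_smul, smul_eq_mul, mul_one]
      simp_rw [h1, Finset.univ_sum_single]
    rw [hL]
    simp only [map_sum, map_mul, MvPolynomial.eval_C, MvPolynomial.eval_X]
    conv_rhs => rw [ha]
    rw [map_sum]
    refine Finset.sum_congr rfl fun i _ => ?_
    rw [map_smul, smul_eq_mul, mul_comm]
  have hLne : ∀ j, L j ≠ 0 := by
    intro j hj
    obtain ⟨a, ha⟩ := DFunLike.ne_iff.1 (hφ0 j)
    apply ha
    have := evalL j a
    rw [hj] at this
    simpa using this.symm
  refine ⟨m, ∏ j, L j, ?_, ?_, ?_⟩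
  · exact Finset.prod_ne_zero_iff.2 fun j _ => hLne j
  · have := MvPolynomial.IsHomogeneous.prod Finset.univ L (fun _ => 1)
      (fun j _ => MvPolynomial.IsHomogeneous.sum _ _ _
        (fun i _ => MvPolynomial.isHomogeneous_C_mul_X _ _))
    simpa using this
  · intro a ha j hmem
    rw [map_prod] at ha
    have := Finset.prod_ne_zero_iff.1 ha j (Finset.mem_univ j)
    rw [evalL] at this
    exact hφ j a this hmem
end
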